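/- Let {λ_k^ρ} and {λ_k^σ} denote the eigenvalues of quantum states ρ and σ on a finite-dimensional Hilbert space, each listed in non-increasing order with multiplicity. Then Σ_k |λ_k^ρ − λ_k^σ| ≤ ‖ρ − σ‖₁ (Mirsky's inequality). -/

import Mathlib

/-!
Weyl monotonicity: if `B - A` is positive semidefinite, then the `k`-th largest eigenvalue of `A`
is at most that of `B`, because the span of the top `k + 1` eigenvectors of `A` and the span of
the bottom `d - k` eigenvectors of `B` meet in a nonzero vector `x`, on which the Rayleigh
quotients are squeezed. Splitting `ρ - σ = P - N` into positive and negative parts, the matrix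
`M = σ + P = ρ + N` dominates both `ρ` and `σ`, so
`|λ_k^ρ - λ_k^σ| ≤ (λ_k^M - λ_k^ρ) + (λ_k^M - λ_k^σ)`; summing over `k` gives
`tr N + tr P = ∑ |λ_i^{ρ-σ}| = ‖ρ - σ‖₁`.
-/

open scoped ComplexOrder

/-- The trace norm `‖A‖₁ = Tr √(Aᴴ A)` of a complex matrix. -/
noncomputable def traceNorm {n : Type*} [Fintype n] [DecidableEq n] (A : Matrix n n ℂ) : ℝ :=
  ((Matrix.posSemidef_conjTranspose_mul_self A).isHermitian.eigenvectorUnitary.1 *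
    Matrix.diagonal (((↑) : ℝ → ℂ) ∘ (Real.sqrt ·) ∘
      (Matrix.posSemidef_conjTranspose_mul_self A).isHermitian.eigenvalues) *
    (star (Matrix.posSemidef_conjTranspose_mul_self A).isHermitian.eigenvectorUnitary :
      Matrix n n ℂ)).trace.re

open Module Submodule Matrix
open scoped InnerProductSpace

theorem Submodule.inf_ne_bot_of_finrank_lt {K V : Type*} [DivisionRing K] [AddCommGroup V]
    [Module K V] [FiniteDimensional K V] {s t : Submodule K V}
    (h : finrank K V < finrank K s + finrank K t) : s ⊓ t ≠ ⊥ := fun hst =>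
  h.not_ge (finrank_add_finrank_le_of_disjoint (disjoint_iff.2 hst))

theorem Fin.exists_perm_antitone_comp {α : Type*} [LinearOrder α] {n : ℕ} (f : Fin n → α) :
    ∃ e : Equiv.Perm (Fin n), Antitone (f ∘ e) :=
  ⟨Tuple.sort (OrderDual.toDual ∘ f), Tuple.monotone_sort (OrderDual.toDual ∘ f)⟩

section Rayleigh

variable {𝕜 E ι : Type*} [RCLike 𝕜] [NormedAddCommGroup E] [InnerProductSpace 𝕜 E]

theorem Orthonormal.inner_eq_zero_of_mem_span_image {v : ι → E} (hv : Orthonormal 𝕜 v)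
    {S : Set ι} {x : E} (hx : x ∈ span 𝕜 (v '' S)) {i : ι} (hi : i ∉ S) : ⟪v i, x⟫_𝕜 = 0 := by
  have hle : span 𝕜 (v '' S) ≤ (𝕜 ∙ v i)ᗮ := by
    refine span_le.2 ?_
    rintro _ ⟨j, hj, rfl⟩
    exact mem_orthogonal_singleton_iff_inner_right.2 (hv.inner_eq_zero fun h => hi (h ▸ hj))
  exact mem_orthogonal_singleton_iff_inner_right.1 (hle hx)

variable [Fintype ι] {T : E →ₗ[𝕜] E} {b : OrthonormalBasis ι 𝕜 E} {μ : ι → ℝ}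

theorem OrthonormalBasis.finrank_span_image (b : OrthonormalBasis ι 𝕜 E) (S : Finset ι) :
    finrank 𝕜 (span 𝕜 (b '' S)) = S.card := by
  rw [Set.image_eq_range]
  exact (finrank_span_eq_card (b.orthonormal.linearIndependent.comp _ Subtype.val_injective)).trans
    (by simp)

theorem OrthonormalBasis.re_inner_apply_self_eq_sum
    (hT : ∀ i, T (b i) = (μ i : 𝕜) • b i) (x : E) :
    RCLike.re ⟪x, T x⟫_𝕜 = ∑ i, μ i * ‖⟪b i, x⟫_𝕜‖ ^ 2 := by
  have hTx : T x = ∑ i, (μ i * ⟪b i, x⟫_𝕜) • b i := by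
    conv_lhs => rw [← b.sum_repr' x]
    simp only [map_sum, map_smul, hT, smul_smul, mul_comm]
  rw [hTx, inner_sum, map_sum]
  refine Finset.sum_congr rfl fun i _ => ?_
  rw [inner_smul_right, ← inner_conj_symm, mul_assoc, RCLike.conj_mul, RCLike.norm_conj,
    ← RCLike.ofReal_pow, ← RCLike.ofReal_mul, RCLike.ofReal_re]

theorem OrthonormalBasis.re_inner_apply_self_le_of_mem_span
    (hT : ∀ i, T (b i) = (μ i : 𝕜) • b i) {S : Finset ι} {c : ℝ} (hc : ∀ i ∈ S, μ i ≤ c)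
    {x : E} (hx : x ∈ span 𝕜 (b '' S)) : RCLike.re ⟪x, T x⟫_𝕜 ≤ c * ‖x‖ ^ 2 := by
  rw [b.re_inner_apply_self_eq_sum hT, ← b.sum_sq_norm_inner_right, Finset.mul_sum]
  refine Finset.sum_le_sum fun i _ => ?_
  by_cases hi : i ∈ S
  · exact mul_le_mul_of_nonneg_right (hc i hi) (by positivity)
  · simp [b.orthonormal.inner_eq_zero_of_mem_span_image hx (by exact_mod_cast hi)]

theorem OrthonormalBasis.le_re_inner_apply_self_of_mem_span
    (hT : ∀ i, T (b i) = (μ i : 𝕜) • b i) {S : Finset ι} {c : ℝ} (hc : ∀ i ∈ S, c ≤ μ i)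
    {x : E} (hx : x ∈ span 𝕜 (b '' S)) : c * ‖x‖ ^ 2 ≤ RCLike.re ⟪x, T x⟫_𝕜 := by
  have hT' : ∀ i, (-T) (b i) = ((-μ i : ℝ) : 𝕜) • b i := fun i => by simp [hT]
  have := b.re_inner_apply_self_le_of_mem_span hT' (c := -c) (fun i hi => neg_le_neg (hc i hi)) hx
  simp only [LinearMap.neg_apply, inner_neg_right, map_neg] at this
  linarith

end Rayleigh

theorem LinearMap.IsPositive.sorted_eigenvalues_le {𝕜 E : Type*} [RCLike 𝕜]
    [NormedAddCommGroup E] [InnerProductSpace 𝕜 E] {d : ℕ} {T T' : E →ₗ[𝕜] E}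
    (hTT' : (T' - T).IsPositive) {b b' : OrthonormalBasis (Fin d) 𝕜 E} {μ μ' : Fin d → ℝ}
    (hT : ∀ i, T (b i) = (μ i : 𝕜) • b i) (hT' : ∀ i, T' (b' i) = (μ' i : 𝕜) • b' i)
    {e e' : Equiv.Perm (Fin d)} (he : Antitone (μ ∘ e)) (he' : Antitone (μ' ∘ e')) (k : Fin d) :
    μ (e k) ≤ μ' (e' k) := by
  have := Module.Finite.of_basis b.toBasis
  set W := span 𝕜 (b '' ((Finset.Iic k).map e.toEmbedding : Finset (Fin d)))
  set W' := span 𝕜 (b' '' ((Finset.Ici k).map e'.toEmbedding : Finset (Fin d)))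
  have hdim : finrank 𝕜 E < finrank 𝕜 W + finrank 𝕜 W' := by
    rw [b.finrank_span_image, b'.finrank_span_image, finrank_eq_card_basis b.toBasis]
    simp only [Finset.card_map, Fin.card_Iic, Fin.card_Ici, Fintype.card_fin]
    omega
  obtain ⟨x, ⟨hxW, hxW'⟩, hx⟩ := exists_mem_ne_zero_of_ne_bot (inf_ne_bot_of_finrank_lt hdim)
  have hlow : μ (e k) * ‖x‖ ^ 2 ≤ RCLike.re ⟪x, T x⟫_𝕜 := by
    refine b.le_re_inner_apply_self_of_mem_span hT (fun i hi => ?_) hxW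
    obtain ⟨j, hj, rfl⟩ := Finset.mem_map.1 hi
    exact he (Finset.mem_Iic.1 hj)
  have hup : RCLike.re ⟪x, T' x⟫_𝕜 ≤ μ' (e' k) * ‖x‖ ^ 2 := by
    refine b'.re_inner_apply_self_le_of_mem_span hT' (fun i hi => ?_) hxW'
    obtain ⟨j, hj, rfl⟩ := Finset.mem_map.1 hi
    exact he' (Finset.mem_Ici.1 hj)
  have hmid : RCLike.re ⟪x, T x⟫_𝕜 ≤ RCLike.re ⟪x, T' x⟫_𝕜 := by
    have := hTT'.re_inner_nonneg_right x
    rw [LinearMap.sub_apply, inner_sub_right, map_sub] at this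
    linarith
  exact le_of_mul_le_mul_right (hlow.trans (hmid.trans hup)) (by positivity)

section HermitianMatrix

variable {𝕜 : Type*} [RCLike 𝕜] {n : Type*} [Fintype n] [DecidableEq n] {A : Matrix n n 𝕜}

theorem Matrix.IsHermitian.toEuclideanLin_eigenvectorBasis (hA : A.IsHermitian) (i : n) :
    A.toEuclideanLin (hA.eigenvectorBasis i) = (hA.eigenvalues i : 𝕜) • hA.eigenvectorBasis i := by
  ext j
  simpa using congrFun (hA.mulVec_eigenvectorBasis i) j

theorem Matrix.IsHermitian.trace_cfc (hA : A.IsHermitian) (f : ℝ → ℝ) :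
    (cfc f A).trace = ∑ i, (f (hA.eigenvalues i) : 𝕜) := by
  rw [hA.cfc_eq, IsHermitian.cfc, Unitary.conjStarAlgAut_apply, trace_mul_cycle,
    Unitary.coe_star_mul_self, one_mul, trace_diagonal]
  rfl

theorem Matrix.IsHermitian.re_trace_eq_sum_eigenvalues (hA : A.IsHermitian) :
    RCLike.re A.trace = ∑ i, hA.eigenvalues i := by
  simp [hA.trace_eq_sum_eigenvalues]

open scoped MatrixOrder in
theorem Matrix.IsHermitian.exists_posSemidef_sub_eq (hA : A.IsHermitian) :
    ∃ P N : Matrix n n 𝕜, P.PosSemidef ∧ N.PosSemidef ∧ P - N = A ∧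
      RCLike.re P.trace + RCLike.re N.trace = ∑ i, |hA.eigenvalues i| := by
  refine ⟨cfc (fun x : ℝ => max x 0) A, cfc (fun x : ℝ => max (-x) 0) A,
    (cfc_nonneg fun _ _ => le_max_right _ _).posSemidef,
    (cfc_nonneg fun _ _ => le_max_right _ _).posSemidef, ?_, ?_⟩
  · rw [← cfc_sub _ _ A, cfc_congr (fun x _ => max_zero_sub_max_neg_zero_eq_self x), cfc_id' ℝ A]
  · simp only [hA.trace_cfc, map_sum, RCLike.ofReal_re, ← Finset.sum_add_distrib,
      max_zero_add_max_neg_zero_eq_abs_self]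

end HermitianMatrix

theorem traceNorm_eq_re_trace_cfc_sqrt {n : Type*} [Fintype n] [DecidableEq n]
    (A : Matrix n n ℂ) : traceNorm A = (cfc Real.sqrt (Aᴴ * A)).trace.re := by
  rw [(posSemidef_conjTranspose_mul_self A).isHermitian.cfc_eq]
  rfl

theorem Matrix.IsHermitian.traceNorm_eq_sum_abs_eigenvalues {n : Type*} [Fintype n]
    [DecidableEq n] {A : Matrix n n ℂ} (hA : A.IsHermitian) :
    traceNorm A = ∑ i, |hA.eigenvalues i| := by
  have hsq : Aᴴ * A = cfc (· ^ 2 : ℝ → ℝ) A := by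
    rw [cfc_pow_id A 2 hA.isSelfAdjoint, hA.eq, sq]
  rw [traceNorm_eq_re_trace_cfc_sqrt, hsq, ← cfc_comp Real.sqrt (· ^ 2 : ℝ → ℝ) A, hA.trace_cfc]
  simp [Real.sqrt_sq_eq_abs]

section Mirsky

variable {𝕜 : Type*} [RCLike 𝕜] {d : ℕ} {A B : Matrix (Fin d) (Fin d) 𝕜}

theorem Matrix.IsHermitian.sorted_eigenvalues_le_of_posSemidef_sub (hA : A.IsHermitian)
    (hB : B.IsHermitian) (hAB : (B - A).PosSemidef) {e e' : Equiv.Perm (Fin d)}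
    (he : Antitone (hA.eigenvalues ∘ e)) (he' : Antitone (hB.eigenvalues ∘ e')) (k : Fin d) :
    hA.eigenvalues (e k) ≤ hB.eigenvalues (e' k) :=
  LinearMap.IsPositive.sorted_eigenvalues_le (by rwa [← map_sub, isPositive_toEuclideanLin_iff])
    hA.toEuclideanLin_eigenvectorBasis hB.toEuclideanLin_eigenvectorBasis he he' k

theorem Matrix.IsHermitian.sum_abs_sub_sorted_eigenvalues_le (hA : A.IsHermitian)
    (hB : B.IsHermitian) {e e' : Equiv.Perm (Fin d)} (he : Antitone (hA.eigenvalues ∘ e))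
    (he' : Antitone (hB.eigenvalues ∘ e')) :
    ∑ k, |hA.eigenvalues (e k) - hB.eigenvalues (e' k)| ≤ ∑ i, |(hA.sub hB).eigenvalues i| := by
  obtain ⟨P, N, hP, hN, hPN, htrace⟩ := (hA.sub hB).exists_posSemidef_sub_eq
  set M := B + P with hM_def
  have hMB : M - B = P := add_sub_cancel_left B P
  have hMA : M - A = N := by rw [hM_def, ← sub_add_cancel A B, ← hPN]; abel
  have hM : M.IsHermitian := hB.add hP.isHermitian
  obtain ⟨eM, heM⟩ := Fin.exists_perm_antitone_comp hM.eigenvalues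
  have hAM := hA.sorted_eigenvalues_le_of_posSemidef_sub hM (hMA ▸ hN) he heM
  have hBM := hB.sorted_eigenvalues_le_of_posSemidef_sub hM (hMB ▸ hP) he' heM
  have sum_gap : ∀ {X : Matrix (Fin d) (Fin d) 𝕜} (hX : X.IsHermitian) (e : Equiv.Perm (Fin d)),
      ∑ k, (hM.eigenvalues (eM k) - hX.eigenvalues (e k)) = RCLike.re (M - X).trace := by
    intro X hX e
    rw [Finset.sum_sub_distrib, Equiv.sum_comp eM hM.eigenvalues, Equiv.sum_comp e hX.eigenvalues,
      trace_sub, map_sub, hM.re_trace_eq_sum_eigenvalues, hX.re_trace_eq_sum_eigenvalues]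
  calc ∑ k, |hA.eigenvalues (e k) - hB.eigenvalues (e' k)|
      ≤ ∑ k, ((hM.eigenvalues (eM k) - hA.eigenvalues (e k)) +
          (hM.eigenvalues (eM k) - hB.eigenvalues (e' k))) :=
        Finset.sum_le_sum fun k _ => by
          rw [abs_sub_le_iff]; constructor <;> linarith [hAM k, hBM k]
    _ = ∑ i, |(hA.sub hB).eigenvalues i| := by
        rw [Finset.sum_add_distrib, sum_gap hA e, sum_gap hB e', hMA, hMB, add_comm, htrace]

end Mirsky

theorem stmt_11_general {d : ℕ} (ρ σ : Matrix (Fin d) (Fin d) ℂ)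
    (hρ : ρ.PosSemidef) (hσ : σ.PosSemidef)
    (lρ lσ : Fin d → ℝ) (hlρa : Antitone lρ) (hlσa : Antitone lσ)
    (hlρ : ∃ e : Equiv.Perm (Fin d), lρ = hρ.isHermitian.eigenvalues ∘ e)
    (hlσ : ∃ e : Equiv.Perm (Fin d), lσ = hσ.isHermitian.eigenvalues ∘ e) :
    ∑ k, |lρ k - lσ k| ≤ traceNorm (ρ - σ) := by
  obtain ⟨eρ, rfl⟩ := hlρ
  obtain ⟨eσ, rfl⟩ := hlσ
  rw [(hρ.isHermitian.sub hσ.isHermitian).traceNorm_eq_sum_abs_eigenvalues]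
  exact hρ.isHermitian.sum_abs_sub_sorted_eigenvalues_le hσ.isHermitian hlρa hlσa

/-- Mirsky's inequality: if `lρ` and `lσ` enumerate the eigenvalues of the states `ρ` and `σ`
(with multiplicity) in non-increasing order, then `∑ k |λ_k^ρ − λ_k^σ| ≤ ‖ρ − σ‖₁`. -/
theorem stmt_11 {d : ℕ} (ρ σ : Matrix (Fin d) (Fin d) ℂ)
    (hρ : ρ.PosSemidef) (hσ : σ.PosSemidef)
    (h1 : ρ.trace = 1) (h2 : σ.trace = 1)
    (lρ lσ : Fin d → ℝ) (hlρa : Antitone lρ) (hlσa : Antitone lσ)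
    (hlρ : ∃ e : Equiv.Perm (Fin d), lρ = hρ.isHermitian.eigenvalues ∘ e)
    (hlσ : ∃ e : Equiv.Perm (Fin d), lσ = hσ.isHermitian.eigenvalues ∘ e) :
    ∑ k, |lρ k - lσ k| ≤ traceNorm (ρ - σ) :=
  stmt_11_general ρ σ hρ hσ lρ lσ hlρa hlσa hlρ hlσ
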